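/- Let O ⊆ P contain A. For every order ideal J ∈ 𝒥ₖ, the transform ξ maps the indicator vector of M_O(J) to the indicator vector of {(1, w^{O,J}(1)), …, (k, w^{O,J}(k))}: ξ(1_{M_O(J)}) = 1_{{(i, w^{O,J}(i)) : 1 ≤ i ≤ k}}. -/

import Mathlib

open scoped Classical Pointwise

noncomputable section

/-- Position of `j` in the total order `1 ⋖ … ⋖ n ⋖ -n ⋖ … ⋖ -1` on `N`. -/
def ordKey (n : ℕ) (j : ℤ) : ℤ := if 0 < j then j else 2 * n + 1 + j

/-- Membership in the type C Gelfand–Tsetlin poset `P`: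
pairs `(i,j)` with `1 ≤ i ≤ n` and `i ≤ |j| ≤ n`. -/
def inP (n : ℕ) (p : ℤ × ℤ) : Prop :=
  1 ≤ p.1 ∧ p.1 ≤ (n : ℤ) ∧ p.1 ≤ |p.2| ∧ |p.2| ≤ (n : ℤ)

/-- The order relation `⪯` of `P`: `(i₁,j₁) ⪯ (i₂,j₂)` iff `i₁ ≤ i₂` and `j₁ ⩽̇ j₂`. -/
def ple (n : ℕ) (p q : ℤ × ℤ) : Prop :=
  p.1 ≤ q.1 ∧ ordKey n p.2 ≤ ordKey n q.2

/-- Strict version of `⪯`. -/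
def plt (n : ℕ) (p q : ℤ × ℤ) : Prop := ple n p q ∧ p ≠ q

/-- The elements of `N = {1,…,n,-n,…,-1}` listed in increasing `⋖` order. -/
def jList (n : ℕ) : List ℤ :=
  ((List.range n).map fun t => (t : ℤ) + 1) ++ ((List.range n).map fun t => (t : ℤ) - n)

/-- All pairs `(i,j)` with `i ∈ [1,n]`, `j ∈ N`, ordered first by `i` increasing,
then by `j` increasing with respect to `⋖`. -/
def posList (n : ℕ) : List (ℤ × ℤ) :=
  (List.range n).flatMap fun a => (jList n).map fun j => ((a : ℤ) + 1, j)

/-- `P` as a finite set. -/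
def Pfin (n : ℕ) : Finset (ℤ × ℤ) := (posList n).toFinset.filter (inP n)

/-- `N` as a finite set. -/
def Nfin (n : ℕ) : Finset ℤ := (jList n).toFinset

/-- The diagonal `A = {(i,i) : 1 ≤ i ≤ n}`. -/
def Aset (n : ℕ) : Finset (ℤ × ℤ) :=
  (Finset.range n).image fun t => (((t : ℤ) + 1, (t : ℤ) + 1) : ℤ × ℤ)

/-- Order ideals (downward closed subsets) of `P`. -/
def IsIdeal (n : ℕ) (J : Finset (ℤ × ℤ)) : Prop :=
  (∀ p ∈ J, inP n p) ∧ ∀ p ∈ J, ∀ q ∈ Pfin n, ple n q p → q ∈ J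

/-- The set of `≺`-maximal elements of `J`. -/
def maxPrec (n : ℕ) (J : Finset (ℤ × ℤ)) : Finset (ℤ × ℤ) :=
  J.filter fun p => ∀ q ∈ J, ple n p q → q = p

/-- `M_O(J) = (J ∩ O) ∪ max_≺(J)`. -/
def MO (n : ℕ) (O J : Finset (ℤ × ℤ)) : Finset (ℤ × ℤ) := (J ∩ O) ∪ maxPrec n J

/-- The permutation `w_M`: the product of the transpositions `s_{i,j}` over `(i,j) ∈ M`,
ordered first by `i` increasing and then by `j` increasing with respect to `⋖`
(the leftmost factor acts last). -/
def wPerm (n : ℕ) (M : Finset (ℤ × ℤ)) : Equiv.Perm ℤ :=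
  (((posList n).filter fun p => decide (p ∈ M)).map fun p => Equiv.swap p.1 p.2).prod

/-- `w^{O,J} = w_O⁻¹ ⬝ w_{M_O(J)}`. -/
def wOJ (n : ℕ) (O J : Finset (ℤ × ℤ)) : Equiv.Perm ℤ :=
  (wPerm n O)⁻¹ * wPerm n (MO n O J)

/-- The principal order ideal `⟨i,j⟩` of `(i,j) ∈ P`. -/
def princ (n : ℕ) (p : ℤ × ℤ) : Finset (ℤ × ℤ) := (Pfin n).filter fun q => ple n q p

/-- `r(i,j) = w^{O,⟨i,j⟩}(i)`. -/
def rMap (n : ℕ) (O : Finset (ℤ × ℤ)) (i j : ℤ) : ℤ := wOJ n O (princ n (i, j)) i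

/-- Inverse of `ordKey` (on the relevant range `[1, 2n]`). -/
def invOrdKey (n : ℕ) (t : ℤ) : ℤ := if t ≤ (n : ℤ) then t else t - (2 * n + 1)

/-- The `⋖`-maximal `j'` with `j' ⋖ j` and `(i,j') ∈ O`. -/
def prevO (n : ℕ) (O : Finset (ℤ × ℤ)) (i j : ℤ) : ℤ :=
  invOrdKey n (WithBot.unbotD 0 ((((Nfin n).filter fun j' => (i, j') ∈ O ∧ ordKey n j' < ordKey n j).image
    (ordKey n)).max))

/-- The pipe-dream linear transform `ξ` of `ℝ^P` (coordinates outside `P` are untouched):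
`ξ(ε_{i,i}) = ε_{i,r(i,i)}` and `ξ(ε_{i,j}) = ε_{i,r(i,j)} - ε_{i,r(i,j')}` for `j ≠ i`,
where `j'` is `⋖`-maximal with `j' ⋖ j` and `(i,j') ∈ O`. -/
def xiMap (n : ℕ) (O : Finset (ℤ × ℤ)) (x : (ℤ × ℤ) → ℝ) : (ℤ × ℤ) → ℝ := fun q =>
  if inP n q then
    (∑ j ∈ (Nfin n).filter (fun j => inP n (q.1, j) ∧ rMap n O q.1 j = q.2), x (q.1, j))
    - (∑ j ∈ (Nfin n).filter
        (fun j => inP n (q.1, j) ∧ j ≠ q.1 ∧ rMap n O q.1 (prevO n O q.1 j) = q.2), x (q.1, j))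
  else x q

/-- Indicator vector `1_{M_O(J)} ∈ ℝ^P`. -/
def indicMO (n : ℕ) (O J : Finset (ℤ × ℤ)) : (ℤ × ℤ) → ℝ := fun p =>
  if p ∈ MO n O J then 1 else 0

/-- The fundamental marked chain-order polytope `𝒬_O(ω_k)`:
the convex hull of the vectors `1_{M_O(J)}`, `J ∈ 𝒥ₖ`. -/
def QOfund (n : ℕ) (O : Finset (ℤ × ℤ)) (k : ℕ) : Set ((ℤ × ℤ) → ℝ) :=
  convexHull ℝ {x | ∃ J : Finset (ℤ × ℤ),
    IsIdeal n J ∧ (J ∩ Aset n).card = k ∧ x = indicMO n O J}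

/-- The marked chain-order polytope `𝒬_O(λ)` for `λ = a₁ω₁ + … + a_nω_n`:
the Minkowski sum `a₁𝒬_O(ω₁) + … + a_n𝒬_O(ω_n)`. -/
def QO (n : ℕ) (O : Finset (ℤ × ℤ)) (a : ℕ → ℕ) : Set ((ℤ × ℤ) → ℝ) :=
  ∑ k ∈ Finset.Icc 1 n, a k • QOfund n O k

/-- Integrality (lattice point) predicate. -/
def IsLat (x : (ℤ × ℤ) → ℝ) : Prop := ∀ p, ∃ m : ℤ, x p = m

/-- Type B: `λ(i) = a_i + … + a_{n-1} + a_n/2`. -/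
def lamB (n : ℕ) (a : ℕ → ℕ) (i : ℤ) : ℝ :=
  (∑ t ∈ Finset.Icc i.toNat (n - 1), (a t : ℝ)) + (a n : ℝ) / 2

/-- The type B poset polytope `𝒬^B_O(λ)` (H-description with factor `1/2`
on the coordinates in `B = {(i,-i)}`). -/
def QB (n : ℕ) (O : Finset (ℤ × ℤ)) (lam : ℤ → ℝ) : Set ((ℤ × ℤ) → ℝ) :=
  {x | (∀ i : ℤ, 1 ≤ i → i ≤ (n : ℤ) → x (i, i) = lam i) ∧
    (∀ p, inP n p → 0 ≤ x p) ∧ (∀ p, ¬ inP n p → x p = 0) ∧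
    ∀ (pq rs : ℤ × ℤ) (c : List (ℤ × ℤ)), pq ∈ O → inP n rs →
      (∀ q ∈ c, inP n q ∧ q ∉ O) →
      List.Chain' (plt n) (pq :: (c ++ [rs])) →
      (c.map x).sum ≤ x pq - (if rs.2 = -rs.1 then (1 : ℝ) / 2 else 1) * x rs}

/-- The point `x^{J,D}`. -/
def xJD (n : ℕ) (O J : Finset (ℤ × ℤ)) (D : Finset ℤ) : (ℤ × ℤ) → ℝ := fun p =>
  if p ∈ MO n O J then (if p.2 = -p.1 ∧ p.1 ∉ D then 2 else 1) else 0

/-- The projection `π : ℝ^P → ℝ^{P∖A}` (realized by zeroing the `A`-coordinates). -/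
def piA (x : (ℤ × ℤ) → ℝ) : (ℤ × ℤ) → ℝ := fun p => if p.2 = p.1 then 0 else x p

/-- The transformed type B poset polytope `Π^B_O(λ) = πξ(𝒬^B_O(λ))`. -/
def PiB (n : ℕ) (O : Finset (ℤ × ℤ)) (a : ℕ → ℕ) : Set ((ℤ × ℤ) → ℝ) :=
  (fun x => piA (xiMap n O x)) '' QB n O (lamB n a)

/-- The point `y^D ∈ ℝ^{P∖A}`. -/
def yD (D : Finset ℤ) : (ℤ × ℤ) → ℝ := fun p => if p.2 = -p.1 ∧ p.1 ∈ D then 1 else 0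

/-! Row `i` of `ξ(1_{M_O(J)})` is a telescoping sum. For `i ≤ k` let `(i, m)` be the `⋖`-last
entry of row `i` of `M = M_O(J)`. Since `(i, m) ∈ J` and every element of `M` strictly `⪯`-below
`(i, m)` lies in `O`, the row of `M` below `m` is the row of `O`; hence `j ↦ j'` maps the row minus
`i` bijectively onto the row minus `m`, and the row sum collapses to `ε_{i, r(i,m)}`. For the same
reason the rows `1, …, i-1` of `M` and of `O` agree `⋖`-below `m`, which is all that `w_M(i)` sees
(the rows `t > i` fix `i`, row `i` sends it to `m`); as the same holds for the principal ideal
`⟨i, m⟩`, `w^{O,J}(i) = w^{O,⟨i,m⟩}(i) = r(i, m)`. Rows `i > k` of `M` are empty because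
`J ∩ A = {(1,1), …, (k,k)}`. -/

open Equiv

section SwapChain

variable {α : Type*} [DecidableEq α]

def swapChain (i : α) (l : List α) : Perm α := (l.map (swap i)).prod

theorem swapChain_cons (i a : α) (l : List α) :
    swapChain i (a :: l) = swap i a * swapChain i l := by
  simp [swapChain]

theorem swapChain_append_singleton (i a : α) (l : List α) :
    swapChain i (l ++ [a]) = swapChain i l * swap i a := by
  simp [swapChain]

theorem swapChain_filter_ne (i : α) (l : List α) :
    swapChain i (l.filter (· ≠ i)) = swapChain i l := by
  induction l with
  | nil => rfl
  | cons a l ih =>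
    by_cases ha : a = i
    · simp [ha, swapChain_cons, ← ih, Perm.one_def]
    · simpa [ha, swapChain_cons] using ih

theorem swapChain_apply_of_notMem {i v : α} {l : List α} (hv : v ≠ i) (hl : v ∉ l) :
    swapChain i l v = v := by
  induction l with
  | nil => rfl
  | cons a l ih =>
    simp only [List.mem_cons, not_or] at hl
    rw [swapChain_cons, Perm.mul_apply, ih hl.2, swap_apply_of_ne_of_ne hv hl.1]

theorem swapChain_apply_self {i : α} {l : List α} (hi : i ∉ l) (hl : l.Nodup) :
    swapChain i l i = l.getLastD i := by
  induction l using List.reverseRecOn with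
  | nil => rfl
  | append_singleton l a ih =>
    have ha : a ∉ l := fun h => (List.nodup_append.1 hl).2.2 a h a (List.mem_singleton_self a) rfl
    rw [swapChain_append_singleton, Perm.mul_apply, swap_apply_left,
      swapChain_apply_of_notMem (fun h => hi (by simp [h])) ha, List.getLastD_concat]

theorem swapChain_apply_of_mem {β : Type*} [LinearOrder β] {f : α → β} {i v : α} {l : List α}
    (hl : l.Pairwise (f · < f ·)) (hi : i ∉ l) (hv : v ∈ l) :
    swapChain i l v = (l.filter (f · < f v)).getLastD i := by
  induction l using List.reverseRecOn with
  | nil => cases hv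
  | append_singleton l a ih =>
    obtain ⟨hl', -, hla⟩ := List.pairwise_append.1 hl
    have hla : ∀ x ∈ l, f x < f a := fun x hx => hla x hx a (List.mem_singleton_self a)
    have hil : i ∉ l := fun h => hi (List.mem_append_left _ h)
    rw [swapChain_append_singleton, Perm.mul_apply, List.filter_append]
    rcases List.mem_append.1 hv with hv | hv
    · have hva : v ≠ a := fun h => (hla v hv).ne (by rw [h])
      rw [swap_apply_of_ne_of_ne (by rintro rfl; exact hil hv) hva, ih hl' hil hv]
      simp [(hla v hv).le.not_gt]
    · have hnodup : l.Nodup := hl'.imp fun h e => h.ne (congrArg f e)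
      rw [List.mem_singleton.1 hv, swap_apply_right, swapChain_apply_self hil hnodup]
      simp [List.filter_eq_self.2 fun x hx => decide_eq_true (hla x hx)]

theorem swapChain_mem_range_ofSubtype {p : α → Prop} [DecidablePred p] {i : α} {l : List α}
    (hi : p i) (hl : ∀ a ∈ l, p a) :
    swapChain i l ∈ (Perm.ofSubtype : Perm (Subtype p) →* Perm α).range := by
  refine Subgroup.list_prod_mem _ fun σ hσ => ?_
  obtain ⟨a, ha, rfl⟩ := List.mem_map.1 hσ
  exact ⟨swap ⟨i, hi⟩ ⟨a, hl a ha⟩, Perm.ofSubtype_swap_eq _ _⟩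

end SwapChain

theorem Equiv.Perm.apply_mem_of_mem_range_ofSubtype {α : Type*} {p : α → Prop} [DecidablePred p]
    {σ : Perm α} (hσ : σ ∈ (Perm.ofSubtype : Perm (Subtype p) →* Perm α).range) {v : α} (hv : p v) :
    p (σ v) := by
  obtain ⟨τ, rfl⟩ := hσ
  rw [Perm.ofSubtype_apply_of_mem τ hv]
  exact (τ ⟨v, hv⟩).2

section OrdKey

variable {n : ℕ}

theorem ordKey_of_pos {j : ℤ} (h : 0 < j) : ordKey n j = j := if_pos h

theorem ordKey_of_nonpos {j : ℤ} (h : j ≤ 0) : ordKey n j = 2 * n + 1 + j := if_neg h.not_gt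

theorem mem_jList {j : ℤ} : j ∈ jList n ↔ 1 ≤ |j| ∧ |j| ≤ n := by
  simp only [jList, bind_pure_comp, List.map_eq_map, List.map_map, List.mem_append, List.mem_map,
    List.mem_range, Function.comp_apply]
  constructor
  · rintro (⟨t, ht, rfl⟩ | ⟨t, ht, rfl⟩) <;> rcases abs_cases ((t : ℤ) + 1) with h | h <;>
      rcases abs_cases ((t : ℤ) - n) with h' | h' <;> omega
  · intro h
    rcases le_or_gt j 0 with hj | hj
    · rw [abs_of_nonpos hj] at h
      exact Or.inr ⟨(j + n).toNat, by omega, by omega⟩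
    · rw [abs_of_pos hj] at h
      exact Or.inl ⟨(j - 1).toNat, by omega, by omega⟩

theorem mem_Nfin {j : ℤ} : j ∈ Nfin n ↔ 1 ≤ |j| ∧ |j| ≤ n := List.mem_toFinset.trans mem_jList

theorem ordKey_injOn : Set.InjOn (ordKey n) (Nfin n) := by
  intro a ha b hb h
  rw [Finset.mem_coe, mem_Nfin] at ha hb
  simp only [ordKey] at h
  rcases abs_cases a with ⟨ha', -⟩ | ⟨ha', -⟩ <;> rcases abs_cases b with ⟨hb', -⟩ | ⟨hb', -⟩ <;>
    rw [ha'] at ha <;> rw [hb'] at hb <;> split_ifs at h <;> omega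

theorem lt_ordKey {t j : ℤ} (ht : 1 ≤ t) (htj : t ≤ |j|) (hjn : |j| ≤ n) (hjt : j ≠ t) :
    t < ordKey n j := by
  simp only [ordKey]
  rcases abs_cases j with ⟨h, -⟩ | ⟨h, -⟩ <;> rw [h] at htj hjn <;> split_ifs <;> omega

theorem le_ordKey {t j : ℤ} (ht : 1 ≤ t) (htj : t ≤ |j|) (hjn : |j| ≤ n) : t ≤ ordKey n j := by
  rcases eq_or_ne j t with rfl | hjt
  · rw [ordKey_of_pos (by omega)]
  · exact (lt_ordKey ht htj hjn hjt).le

theorem invOrdKey_ordKey {j : ℤ} (hj : j ∈ Nfin n) : invOrdKey n (ordKey n j) = j := by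
  rw [mem_Nfin] at hj
  simp only [ordKey, invOrdKey]
  rcases abs_cases j with ⟨h, -⟩ | ⟨h, -⟩ <;> rw [h] at hj <;> split_ifs <;> omega

theorem jList_pairwise : (jList n).Pairwise (ordKey n · < ordKey n ·) := by
  simp only [jList, bind_pure_comp, List.map_eq_map, List.map_map, List.pairwise_append,
    List.pairwise_map, List.mem_map, List.mem_range, Function.comp_apply]
  refine ⟨List.pairwise_lt_range.imp_of_mem fun ha hb h => ?_,
    List.pairwise_lt_range.imp_of_mem fun ha hb h => ?_, ?_⟩
  · rw [List.mem_range] at ha hb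
    rw [ordKey_of_pos (by omega), ordKey_of_pos (by omega)]; omega
  · rw [List.mem_range] at ha hb
    rw [ordKey_of_nonpos (by omega), ordKey_of_nonpos (by omega)]; omega
  · rintro _ ⟨a, ha, rfl⟩ _ ⟨b, hb, rfl⟩
    rw [ordKey_of_pos (by omega), ordKey_of_nonpos (by omega)]; omega

end OrdKey

theorem Finset.mem_iff_lt_card_of_forall_le {s : Finset ℕ} (hs : ∀ a ∈ s, ∀ b ≤ a, b ∈ s)
    {t : ℕ} : t ∈ s ↔ t < s.card := by
  constructor
  · intro ht
    have := Finset.card_le_card fun b hb => hs t ht b (Nat.lt_succ_iff.1 (Finset.mem_range.1 hb))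
    rwa [Finset.card_range] at this
  · intro ht
    by_contra hts
    have := Finset.card_le_card fun a ha =>
      Finset.mem_range.2 (lt_of_not_ge fun hta => hts (hs a ha t hta))
    rw [Finset.card_range] at this
    omega

section Poset

variable {n : ℕ}

theorem mem_Pfin {p : ℤ × ℤ} : p ∈ Pfin n ↔ inP n p := by
  refine ⟨fun h => (Finset.mem_filter.1 h).2, fun h => Finset.mem_filter.2 ⟨?_, h⟩⟩
  obtain ⟨h1, h2, h3, h4⟩ := h
  simp only [posList, bind_pure_comp, List.map_eq_map, List.flatMap_map, List.mem_toFinset,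
    List.mem_flatMap, List.mem_map, List.mem_range, mem_jList]
  exact ⟨(p.1 - 1).toNat, by omega, p.2, ⟨by omega, h4⟩, Prod.ext (by simp; omega) rfl⟩

theorem mem_Nfin_of_inP {i j : ℤ} (h : inP n (i, j)) : j ∈ Nfin n :=
  mem_Nfin.2 ⟨h.1.trans h.2.2.1, h.2.2.2⟩

theorem diag_mem_Aset {i : ℤ} (h1 : 1 ≤ i) (hn : i ≤ n) : (i, i) ∈ Aset n := by
  simp only [Aset, bind_pure_comp, Finset.fmap_def, Finset.image_image, Finset.mem_image,
    Finset.mem_range, Function.comp_apply]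
  exact ⟨(i - 1).toNat, by omega, by ext <;> simp <;> omega⟩

theorem inP_diag {i : ℤ} (h1 : 1 ≤ i) (hn : i ≤ n) : inP n (i, i) := by
  refine ⟨h1, hn, ?_, ?_⟩ <;> simp only [abs_of_pos (by omega : (0 : ℤ) < i)] <;> omega

theorem ple_diag {i j : ℤ} (h : inP n (i, j)) : ple n (i, i) (i, j) :=
  ⟨le_rfl, by rw [ordKey_of_pos (by have := h.1; omega)]; exact le_ordKey h.1 h.2.2.1 h.2.2.2⟩

theorem ple_trans {p q r : ℤ × ℤ} (hpq : ple n p q) (hqr : ple n q r) : ple n p r :=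
  ⟨hpq.1.trans hqr.1, hpq.2.trans hqr.2⟩

theorem ple_antisymm {p q : ℤ × ℤ} (hp : inP n p) (hq : inP n q) (hpq : ple n p q)
    (hqp : ple n q p) : p = q :=
  Prod.ext (hpq.1.antisymm hqp.1) (ordKey_injOn (mem_Nfin.2 ⟨hp.1.trans hp.2.2.1, hp.2.2.2⟩)
    (mem_Nfin.2 ⟨hq.1.trans hq.2.2.1, hq.2.2.2⟩) (hpq.2.antisymm hqp.2))

theorem mem_princ {p q : ℤ × ℤ} : q ∈ princ n p ↔ inP n q ∧ ple n q p := by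
  rw [princ, Finset.mem_filter, mem_Pfin]

theorem isIdeal_princ (p : ℤ × ℤ) : IsIdeal n (princ n p) :=
  ⟨fun _ hq => (mem_princ.1 hq).1,
    fun _ hq _ hr hrq => mem_princ.2 ⟨mem_Pfin.1 hr, ple_trans hrq (mem_princ.1 hq).2⟩⟩

theorem card_filter_diag (J : Finset (ℤ × ℤ)) :
    ((Finset.range n).filter fun t : ℕ => (((t : ℤ) + 1, (t : ℤ) + 1) : ℤ × ℤ) ∈ J).card
      = (J ∩ Aset n).card := by
  rw [Finset.inter_comm, ← Finset.filter_mem_eq_inter]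
  simp only [Aset, bind_pure_comp, Finset.fmap_def, Finset.image_image, Finset.filter_image]
  exact (Finset.card_image_of_injective _ fun a b h => by simpa using h).symm

theorem card_inter_Aset_le (J : Finset (ℤ × ℤ)) : (J ∩ Aset n).card ≤ n := by
  rw [← card_filter_diag]
  exact (Finset.card_filter_le _ _).trans (Finset.card_range n).le

namespace IsIdeal

variable {J : Finset (ℤ × ℤ)}

theorem subset_Pfin (hJ : IsIdeal n J) : J ⊆ Pfin n := fun p hp => mem_Pfin.2 (hJ.1 p hp)

theorem diag_mem (hJ : IsIdeal n J) {i j : ℤ} (h : (i, j) ∈ J) : (i, i) ∈ J := by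
  have hij := hJ.1 _ h
  exact hJ.2 _ h _ (mem_Pfin.2 (inP_diag hij.1 hij.2.1)) (ple_diag hij)

theorem diag_mem_iff {k : ℕ} (hJ : IsIdeal n J) (hJk : (J ∩ Aset n).card = k) {i : ℤ}
    (h1 : 1 ≤ i) (hn : i ≤ n) : (i, i) ∈ J ↔ i ≤ k := by
  set T := (Finset.range n).filter fun t : ℕ => (((t : ℤ) + 1, (t : ℤ) + 1) : ℤ × ℤ) ∈ J
  have hlower : ∀ a ∈ T, ∀ b ≤ a, b ∈ T := by
    intro a ha b hba
    rw [Finset.mem_filter, Finset.mem_range] at ha ⊢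
    refine ⟨by omega, hJ.2 _ ha.2 _ (mem_Pfin.2 (inP_diag (by omega) (by omega))) ⟨?_, ?_⟩⟩
    · simp only; omega
    · simp only; rw [ordKey_of_pos (by omega), ordKey_of_pos (by omega)]; omega
  have := Finset.mem_iff_lt_card_of_forall_le hlower (t := (i - 1).toNat)
  rw [card_filter_diag, hJk, Finset.mem_filter, Finset.mem_range,
    show (((i - 1).toNat : ℕ) : ℤ) + 1 = i by omega] at this
  exact ⟨fun h => by have := this.1 ⟨by omega, h⟩; omega, fun h => (this.2 (by omega)).2⟩

end IsIdeal

end Poset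

def rowCols (n : ℕ) (S : Finset (ℤ × ℤ)) (t : ℤ) : List ℤ :=
  (jList n).filter fun j => (t, j) ∈ S ∧ j ≠ t

def rowPerm (n : ℕ) (S : Finset (ℤ × ℤ)) (t : ℤ) : Perm ℤ := swapChain t (rowCols n S t)

def rows (n : ℕ) : List ℤ := (List.range n).map fun a : ℕ => (a : ℤ) + 1

def rowsPerm (n : ℕ) (S : Finset (ℤ × ℤ)) (l : List ℤ) : Perm ℤ := (l.map (rowPerm n S)).prod

section Rows

variable {n : ℕ} {S O : Finset (ℤ × ℤ)}

theorem mem_rowCols {t j : ℤ} : j ∈ rowCols n S t ↔ j ∈ jList n ∧ (t, j) ∈ S ∧ j ≠ t := by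
  simp [rowCols]

theorem rowCols_pairwise {t : ℤ} : (rowCols n S t).Pairwise (ordKey n · < ordKey n ·) :=
  jList_pairwise.sublist List.filter_sublist

theorem self_notMem_rowCols {t : ℤ} : t ∉ rowCols n S t := fun h => (mem_rowCols.1 h).2.2 rfl

theorem rowsPerm_cons (t : ℤ) (l : List ℤ) :
    rowsPerm n S (t :: l) = rowPerm n S t * rowsPerm n S l := List.prod_cons

theorem rowsPerm_singleton (t : ℤ) : rowsPerm n S [t] = rowPerm n S t := List.prod_singleton

theorem rowsPerm_append (l l' : List ℤ) :
    rowsPerm n S (l ++ l') = rowsPerm n S l * rowsPerm n S l' := by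
  simp [rowsPerm]

theorem wPerm_eq_rowsPerm : wPerm n S = rowsPerm n S (rows n) := by
  simp only [wPerm, posList, rowsPerm, rows, bind_pure_comp, List.map_eq_map, List.flatMap,
    List.filter_flatten, List.map_flatten, List.prod_flatten, List.map_map]
  congr 1
  refine List.map_congr_left fun a _ => ?_
  calc _ = swapChain ((a : ℤ) + 1) ((jList n).filter fun j => ((a : ℤ) + 1, j) ∈ S) := by
        simp only [Function.comp_apply, List.filter_map, List.map_map]; rfl
    _ = rowPerm n S (a + 1) := by
        rw [← swapChain_filter_ne, List.filter_filter, rowPerm, rowCols]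
        congr 1
        exact List.filter_congr fun j _ => by simp [and_comm]

theorem mem_rows {t : ℤ} : t ∈ rows n ↔ 1 ≤ t ∧ t ≤ n := by
  simp only [rows, List.mem_map, List.mem_range]
  exact ⟨by rintro ⟨a, ha, rfl⟩; omega, fun h => ⟨(t - 1).toNat, by omega, by omega⟩⟩

theorem rows_pairwise : (rows n).Pairwise (· < ·) :=
  List.pairwise_map.2 (List.pairwise_lt_range.imp fun h => by omega)

theorem rows_eq_append {i : ℤ} (h1 : 1 ≤ i) (hn : i ≤ n) :
    ∃ la lb, rows n = la ++ i :: lb ∧ la.Pairwise (· < ·) ∧ (∀ t ∈ la, 1 ≤ t ∧ t < i) ∧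
      ∀ t ∈ lb, i < t ∧ t ≤ n := by
  obtain ⟨la, lb, hsplit⟩ := List.append_of_mem (mem_rows.2 ⟨h1, hn⟩)
  have hsorted := hsplit ▸ (rows_pairwise (n := n))
  obtain ⟨hla, hib, hlaib⟩ := List.pairwise_append.1 hsorted
  have hmem : ∀ t, t ∈ la ∨ t ∈ i :: lb → 1 ≤ t ∧ t ≤ n := fun t ht =>
    mem_rows.1 (hsplit ▸ List.mem_append.2 ht)
  refine ⟨la, lb, hsplit, hla, fun t ht => ⟨(hmem t (Or.inl ht)).1, hlaib t ht i (by simp)⟩,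
    fun t ht => ⟨List.rel_of_pairwise_cons hib ht, (hmem t (Or.inr (by simp [ht]))).2⟩⟩

theorem rowPerm_apply_of_notMem {t v : ℤ} (hvt : v ≠ t) (hv : (t, v) ∉ S) :
    rowPerm n S t v = v :=
  swapChain_apply_of_notMem hvt fun h => hv (mem_rowCols.1 h).2.1

theorem rowPerm_apply_of_mem (hS : S ⊆ Pfin n) {t v : ℤ} (hv : (t, v) ∈ S) (hvt : v ≠ t) :
    rowPerm n S t v = ((rowCols n S t).filter (ordKey n · < ordKey n v)).getLastD t :=
  swapChain_apply_of_mem rowCols_pairwise self_notMem_rowCols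
    (mem_rowCols.2 ⟨mem_jList.2 (mem_Nfin.1 (mem_Nfin_of_inP (mem_Pfin.1 (hS hv)))), hv, hvt⟩)

theorem rowPerm_apply_congr (hS : S ⊆ Pfin n) (hO : O ⊆ Pfin n) {t v : ℤ} (hvt : v ≠ t)
    (hagree : ∀ j, ordKey n j ≤ ordKey n v → ((t, j) ∈ S ↔ (t, j) ∈ O)) :
    rowPerm n S t v = rowPerm n O t v := by
  by_cases hvO : (t, v) ∈ O
  · rw [rowPerm_apply_of_mem hS ((hagree v le_rfl).2 hvO) hvt, rowPerm_apply_of_mem hO hvO hvt,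
      rowCols, rowCols, List.filter_filter, List.filter_filter]
    congr 1
    refine List.filter_congr fun j _ => ?_
    by_cases hj : ordKey n j < ordKey n v
    · simp [hj, hagree j hj.le]
    · simp [hj]
  · rw [rowPerm_apply_of_notMem hvt hvO,
      rowPerm_apply_of_notMem hvt fun h => hvO ((hagree v le_rfl).1 h)]

theorem rowPerm_apply_bounds (hO : O ⊆ Pfin n) {t v : ℤ} (ht : 1 ≤ t) (htv : t < |v|)
    (hvn : |v| ≤ n) :
    t ≤ |rowPerm n O t v| ∧ |rowPerm n O t v| ≤ n ∧ ordKey n (rowPerm n O t v) ≤ ordKey n v := by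
  have hvt : v ≠ t := by rintro rfl; rw [abs_of_pos (by omega)] at htv; omega
  by_cases hvO : (t, v) ∈ O
  · rw [rowPerm_apply_of_mem hO hvO hvt]
    rcases List.mem_cons.1 List.getLastD_mem_cons with h | h
    · rw [h]
      have htn : t ≤ n := (mem_Pfin.1 (hO hvO)).2.1
      rw [abs_of_pos (by omega), ordKey_of_pos (by omega)]
      exact ⟨le_rfl, htn, (lt_ordKey ht htv.le hvn hvt).le⟩
    · obtain ⟨hw, hwv⟩ := List.mem_filter.1 h
      have hwP := mem_Pfin.1 (hO (mem_rowCols.1 hw).2.1)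
      exact ⟨hwP.2.2.1, hwP.2.2.2, (decide_eq_true_iff.1 hwv).le⟩
  · rw [rowPerm_apply_of_notMem hvt hvO]
    exact ⟨htv.le, hvn, le_rfl⟩

theorem rowsPerm_apply_congr (hS : S ⊆ Pfin n) (hO : O ⊆ Pfin n) {l : List ℤ}
    (hl : l.Pairwise (· < ·)) (hl1 : ∀ t ∈ l, 1 ≤ t) {v : ℤ} (hlv : ∀ t ∈ l, t < |v|)
    (hvn : |v| ≤ n) (hagree : ∀ t ∈ l, ∀ j, ordKey n j ≤ ordKey n v → ((t, j) ∈ S ↔ (t, j) ∈ O)) :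
    rowsPerm n S l v = rowsPerm n O l v := by
  induction l using List.reverseRecOn generalizing v with
  | nil => rfl
  | append_singleton l t ih =>
    obtain ⟨hl', -, hlt⟩ := List.pairwise_append.1 hl
    have htl : t ∈ l ++ [t] := by simp
    have hvt : v ≠ t := by
      rintro rfl; have := hlv _ htl; rw [abs_of_pos (by linarith [hl1 _ htl])] at this; omega
    obtain ⟨hw1, hw2, hw3⟩ := rowPerm_apply_bounds hO (hl1 t htl) (hlv t htl) hvn
    rw [rowsPerm_append, rowsPerm_append, Perm.mul_apply, Perm.mul_apply, rowsPerm_singleton,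
      rowsPerm_singleton, rowPerm_apply_congr hS hO hvt (hagree t htl)]
    refine ih hl' (fun s hs => hl1 s (by simp [hs]))
      (fun s hs => (hlt s hs t (List.mem_singleton_self t)).trans_le hw1) hw2
      (fun s hs j hj => hagree s (by simp [hs]) j (hj.trans hw3))

theorem rowsPerm_apply_of_lt (hS : S ⊆ Pfin n) {i : ℤ} (hi : 1 ≤ i) {l : List ℤ}
    (hl : ∀ t ∈ l, i < t) : rowsPerm n S l i = i := by
  induction l with
  | nil => rfl
  | cons t l ih =>
    have hit := hl t List.mem_cons_self
    rw [rowsPerm_cons, Perm.mul_apply, ih fun s hs => hl s (List.mem_cons_of_mem t hs)]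
    refine rowPerm_apply_of_notMem hit.ne fun h => ?_
    have := (mem_Pfin.1 (hS h)).2.2.1
    rw [abs_of_pos (by omega)] at this
    omega

theorem wPerm_apply_eq (hS : S ⊆ Pfin n) {i : ℤ} (hi : 1 ≤ i) {la lb : List ℤ}
    (hsplit : rows n = la ++ i :: lb) (hlb : ∀ t ∈ lb, i < t) :
    wPerm n S i = rowsPerm n S la ((rowCols n S i).getLastD i) := by
  rw [wPerm_eq_rowsPerm, hsplit, rowsPerm_append, rowsPerm_cons, Perm.mul_apply, Perm.mul_apply,
    rowsPerm_apply_of_lt hS hi hlb, rowPerm,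
    swapChain_apply_self self_notMem_rowCols (rowCols_pairwise.imp fun h e => h.ne (by rw [e]))]

theorem getLastD_rowCols_eq (hS : S ⊆ Pfin n) {i m : ℤ} (hm : (i, m) ∈ S)
    (hmax : ∀ j, (i, j) ∈ S → ordKey n j ≤ ordKey n m) : (rowCols n S i).getLastD i = m := by
  have him := mem_Pfin.1 (hS hm)
  rcases eq_or_ne m i with rfl | hmi
  · suffices rowCols n S m = [] by rw [this]; rfl
    refine List.eq_nil_iff_forall_not_mem.2 fun j hj => ?_
    obtain ⟨-, hjS, hji⟩ := mem_rowCols.1 hj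
    have hjP := mem_Pfin.1 (hS hjS)
    have := hmax j hjS
    have hm1 : (1 : ℤ) ≤ m := him.1
    rw [ordKey_of_pos (n := n) (j := m) (by omega)] at this
    linarith [lt_ordKey (n := n) hjP.1 hjP.2.2.1 hjP.2.2.2 hji]
  · obtain ⟨la, lb, hsplit⟩ := List.append_of_mem
      (mem_rowCols.2 ⟨mem_jList.2 (mem_Nfin.1 (mem_Nfin_of_inP him)), hm, hmi⟩)
    have hsorted := hsplit ▸ (rowCols_pairwise (n := n) (S := S) (t := i))
    have hlb : lb = [] := by
      refine List.eq_nil_iff_forall_not_mem.2 fun j hj => ?_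
      have hlt := List.rel_of_pairwise_cons (List.pairwise_append.1 hsorted).2.1 hj
      have hjS : j ∈ rowCols n S i := hsplit ▸ List.mem_append_right la (List.mem_cons_of_mem m hj)
      exact (hmax j (mem_rowCols.1 hjS).2.1).not_gt hlt
    rw [hsplit, hlb, List.getLastD_concat]

theorem rowsPerm_mem_range_ofSubtype (hO : O ⊆ Pfin n) {i : ℤ} (hi : 1 ≤ i) {l : List ℤ}
    (hl : ∀ t ∈ l, i ≤ t ∧ t ≤ n) :
    rowsPerm n O l ∈
      (Perm.ofSubtype : Perm {v : ℤ // i ≤ |v| ∧ |v| ≤ n} →* Perm ℤ).range := by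
  refine Subgroup.list_prod_mem _ fun σ hσ => ?_
  obtain ⟨t, ht, rfl⟩ := List.mem_map.1 hσ
  have ht0 : 0 < t := by linarith [(hl t ht).1]
  refine swapChain_mem_range_ofSubtype ?_ fun j hj => ?_
  · rw [abs_of_pos ht0]; exact hl t ht
  · have := mem_Pfin.1 (hO (mem_rowCols.1 hj).2.1)
    exact ⟨(hl t ht).1.trans this.2.2.1, this.2.2.2⟩

end Rows

def rowSet (n : ℕ) (S : Finset (ℤ × ℤ)) (i : ℤ) : Finset ℤ := (Nfin n).filter fun j => (i, j) ∈ S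

section MO

variable {n : ℕ} {O J : Finset (ℤ × ℤ)}

theorem MO_subset : MO n O J ⊆ J :=
  Finset.union_subset Finset.inter_subset_left (Finset.filter_subset _ _)

theorem IsIdeal.MO_subset_Pfin (hJ : IsIdeal n J) : MO n O J ⊆ Pfin n :=
  MO_subset.trans hJ.subset_Pfin

theorem mem_rowSet_MO (hJ : IsIdeal n J) {i j : ℤ} :
    j ∈ rowSet n (MO n O J) i ↔ (i, j) ∈ MO n O J :=
  ⟨fun h => (Finset.mem_filter.1 h).2, fun h => Finset.mem_filter.2
    ⟨mem_Nfin_of_inP (mem_Pfin.1 (hJ.MO_subset_Pfin h)), h⟩⟩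

theorem mem_MO_of_ple (hO : O ⊆ Pfin n) (hJ : IsIdeal n J) {p q : ℤ × ℤ} (hq : q ∈ O)
    (hp : p ∈ J) (hqp : ple n q p) : q ∈ MO n O J :=
  Finset.mem_union_left _ (Finset.mem_inter.2 ⟨hJ.2 p hp q (hO hq) hqp, hq⟩)

theorem mem_of_mem_MO_of_ple {p q : ℤ × ℤ} (hp : p ∈ MO n O J) (hq : q ∈ J) (hpq : ple n p q)
    (hne : p ≠ q) : p ∈ O := by
  rcases Finset.mem_union.1 hp with h | h
  · exact (Finset.mem_inter.1 h).2
  · exact absurd ((Finset.mem_filter.1 h).2 q hq hpq).symm hne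

theorem exists_max_row (hA : Aset n ⊆ O) (hJ : IsIdeal n J) {i : ℤ} (hii : (i, i) ∈ J) :
    ∃ m, (i, m) ∈ MO n O J ∧ ∀ j, (i, j) ∈ MO n O J → ordKey n j ≤ ordKey n m := by
  have hiiP := hJ.1 _ hii
  have hiiM : (i, i) ∈ MO n O J :=
    Finset.mem_union_left _ (Finset.mem_inter.2 ⟨hii, hA (diag_mem_Aset hiiP.1 hiiP.2.1)⟩)
  obtain ⟨m, hm, hmax⟩ := Finset.exists_max_image (rowSet n (MO n O J) i) (ordKey n)
    ⟨i, (mem_rowSet_MO hJ).2 hiiM⟩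
  exact ⟨m, (mem_rowSet_MO hJ).1 hm, fun j hj => hmax j ((mem_rowSet_MO hJ).2 hj)⟩

theorem wOJ_apply_eq (hO : O ⊆ Pfin n) (hJ : IsIdeal n J) {i m : ℤ} (hm : (i, m) ∈ MO n O J)
    (hmax : ∀ j, (i, j) ∈ MO n O J → ordKey n j ≤ ordKey n m) {la lb : List ℤ}
    (hsplit : rows n = la ++ i :: lb) (hla : la.Pairwise (· < ·))
    (hla' : ∀ t ∈ la, 1 ≤ t ∧ t < i) (hlb : ∀ t ∈ lb, i < t) :
    wOJ n O J i = (rowsPerm n O (i :: lb))⁻¹ m := by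
  have hmP := mem_Pfin.1 (hJ.MO_subset_Pfin hm)
  have hagree : ∀ t ∈ la, ∀ j, ordKey n j ≤ ordKey n m → ((t, j) ∈ MO n O J ↔ (t, j) ∈ O) :=
    fun t ht j hj => ⟨fun h => mem_of_mem_MO_of_ple h (MO_subset hm) ⟨(hla' t ht).2.le, hj⟩
        (fun e => (hla' t ht).2.ne (congrArg Prod.fst e)),
      fun h => mem_MO_of_ple hO hJ h (MO_subset hm) ⟨(hla' t ht).2.le, hj⟩⟩
  have hwM : wPerm n (MO n O J) i = rowsPerm n O la m := by
    rw [wPerm_apply_eq hJ.MO_subset_Pfin hmP.1 hsplit hlb,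
      getLastD_rowCols_eq hJ.MO_subset_Pfin hm hmax]
    exact rowsPerm_apply_congr hJ.MO_subset_Pfin hO hla (fun t ht => (hla' t ht).1)
      (fun t ht => (hla' t ht).2.trans_le hmP.2.2.1) hmP.2.2.2 hagree
  rw [wOJ, Perm.mul_apply, hwM, wPerm_eq_rowsPerm, hsplit, rowsPerm_append, mul_inv_rev,
    Perm.mul_apply, Perm.inv_def, Perm.inv_def, symm_apply_apply]

theorem wOJ_apply_eq_rMap (hO : O ⊆ Pfin n) (hJ : IsIdeal n J) {i m : ℤ}
    (hm : (i, m) ∈ MO n O J) (hmax : ∀ j, (i, j) ∈ MO n O J → ordKey n j ≤ ordKey n m) :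
    wOJ n O J i = rMap n O i m := by
  have hmP := mem_Pfin.1 (hJ.MO_subset_Pfin hm)
  have hm_princ : (i, m) ∈ princ n (i, m) := mem_princ.2 ⟨hmP, le_rfl, le_rfl⟩
  have hm' : (i, m) ∈ MO n O (princ n (i, m)) :=
    Finset.mem_union_right _ (Finset.mem_filter.2 ⟨hm_princ, fun q hq hle =>
      ple_antisymm (mem_princ.1 hq).1 hmP (mem_princ.1 hq).2 hle⟩)
  have hmax' : ∀ j, (i, j) ∈ MO n O (princ n (i, m)) → ordKey n j ≤ ordKey n m :=
    fun j hj => (mem_princ.1 (MO_subset hj)).2.2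
  obtain ⟨la, lb, hsplit, hla, hla', hlb⟩ := rows_eq_append hmP.1 hmP.2.1
  rw [rMap, wOJ_apply_eq hO hJ hm hmax hsplit hla hla' fun t ht => (hlb t ht).1,
    wOJ_apply_eq hO (isIdeal_princ _) hm' hmax' hsplit hla hla' fun t ht => (hlb t ht).1]

theorem inP_wOJ_apply (hA : Aset n ⊆ O) (hO : O ⊆ Pfin n) (hJ : IsIdeal n J) {i : ℤ}
    (hii : (i, i) ∈ J) : inP n (i, wOJ n O J i) := by
  obtain ⟨m, hm, hmax⟩ := exists_max_row hA hJ hii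
  have hmP := mem_Pfin.1 (hJ.MO_subset_Pfin hm)
  obtain ⟨la, lb, hsplit, hla, hla', hlb⟩ := rows_eq_append hmP.1 hmP.2.1
  rw [wOJ_apply_eq hO hJ hm hmax hsplit hla hla' fun t ht => (hlb t ht).1]
  have hrange := inv_mem (rowsPerm_mem_range_ofSubtype hO hmP.1 (l := i :: lb) fun t ht =>
    (List.mem_cons.1 ht).elim (fun h => ⟨h.ge, h ▸ hmP.2.1⟩) fun h => ⟨(hlb t h).1.le, (hlb t h).2⟩)
  exact ⟨hmP.1, hmP.2.1, Perm.apply_mem_of_mem_range_ofSubtype hrange ⟨hmP.2.2.1, hmP.2.2.2⟩⟩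

end MO

theorem Finset.sum_sub_sum_erase_comp {α G : Type*} [DecidableEq α] [AddCommGroup G]
    {s : Finset α} {a b : α} (ha : a ∈ s) (hb : b ∈ s) {φ : α → α}
    (hφ : Set.MapsTo φ (s.erase a) (s.erase b)) (hφ_inj : Set.InjOn φ (s.erase a)) (f : α → G) :
    ∑ x ∈ s, f x - ∑ x ∈ s.erase a, f (φ x) = f b := by
  have hφ_surj := Finset.surjOn_of_injOn_of_card_le φ hφ hφ_inj
    (by rw [Finset.card_erase_of_mem ha, Finset.card_erase_of_mem hb])
  rw [Finset.sum_nbij φ (fun x hx => hφ hx) hφ_inj hφ_surj fun _ _ => rfl,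
    ← Finset.add_sum_erase s f hb, add_sub_cancel_right]

section Telescope

variable {n : ℕ} {O J : Finset (ℤ × ℤ)}

theorem prevO_spec (hA : Aset n ⊆ O) (hO : O ⊆ Pfin n) {i j : ℤ} (hi1 : 1 ≤ i) (hin : i ≤ n)
    (hij : i < ordKey n j) :
    (i, prevO n O i j) ∈ O ∧ ordKey n (prevO n O i j) < ordKey n j ∧
      ∀ j', (i, j') ∈ O → ordKey n j' < ordKey n j → ordKey n j' ≤ ordKey n (prevO n O i j) := by
  set F := (Nfin n).filter fun j' => (i, j') ∈ O ∧ ordKey n j' < ordKey n j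
  have hF : (F.image (ordKey n)).Nonempty := ⟨ordKey n i, Finset.mem_image_of_mem _
    (Finset.mem_filter.2 ⟨mem_Nfin_of_inP (inP_diag hi1 hin), hA (diag_mem_Aset hi1 hin),
      by rwa [ordKey_of_pos (by omega)]⟩)⟩
  obtain ⟨j₀, hj₀F, hj₀⟩ := Finset.mem_image.1 (Finset.max'_mem _ hF)
  obtain ⟨hj₀N, hj₀O, hj₀lt⟩ := Finset.mem_filter.1 hj₀F
  have hprev : prevO n O i j = j₀ := by
    rw [prevO, ← Finset.coe_max' hF, WithBot.unbotD_coe, ← hj₀, invOrdKey_ordKey hj₀N]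
  rw [hprev]
  refine ⟨hj₀O, hj₀lt, fun j' hj'O hj'lt => hj₀ ▸ Finset.le_max' _ _ (Finset.mem_image_of_mem _
    (Finset.mem_filter.2 ⟨mem_Nfin_of_inP (mem_Pfin.1 (hO hj'O)), hj'O, hj'lt⟩))⟩

theorem prevO_spec_of_mem_rowSet (hA : Aset n ⊆ O) (hO : O ⊆ Pfin n) (hJ : IsIdeal n J)
    {i j : ℤ} (hj : j ∈ (rowSet n (MO n O J) i).erase i) :
    (i, prevO n O i j) ∈ O ∧ ordKey n (prevO n O i j) < ordKey n j ∧
      ∀ j', (i, j') ∈ O → ordKey n j' < ordKey n j → ordKey n j' ≤ ordKey n (prevO n O i j) := by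
  obtain ⟨hji, hjR⟩ := Finset.mem_erase.1 hj
  have hjP := mem_Pfin.1 (hJ.MO_subset_Pfin ((mem_rowSet_MO hJ).1 hjR))
  exact prevO_spec hA hO hjP.1 hjP.2.1 (lt_ordKey hjP.1 hjP.2.2.1 hjP.2.2.2 hji)

theorem mapsTo_prevO_rowSet (hA : Aset n ⊆ O) (hO : O ⊆ Pfin n) (hJ : IsIdeal n J) {i m : ℤ}
    (hm : (i, m) ∈ MO n O J) (hmax : ∀ j, (i, j) ∈ MO n O J → ordKey n j ≤ ordKey n m) :
    Set.MapsTo (prevO n O i) ((rowSet n (MO n O J) i).erase i) ((rowSet n (MO n O J) i).erase m) :=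
  fun j hj => by
    obtain ⟨hpO, hplt, -⟩ := prevO_spec_of_mem_rowSet hA hO hJ hj
    have hjm := hmax j ((mem_rowSet_MO hJ).1 (Finset.mem_of_mem_erase hj))
    exact Finset.mem_erase.2 ⟨fun e => (hplt.trans_le hjm).ne (by rw [e]), (mem_rowSet_MO hJ).2
      (mem_MO_of_ple hO hJ hpO (MO_subset hm) ⟨le_rfl, (hplt.trans_le hjm).le⟩)⟩

theorem injOn_prevO_rowSet (hA : Aset n ⊆ O) (hO : O ⊆ Pfin n) (hJ : IsIdeal n J) {i m : ℤ}
    (hm : (i, m) ∈ MO n O J) (hmax : ∀ j, (i, j) ∈ MO n O J → ordKey n j ≤ ordKey n m) :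
    Set.InjOn (prevO n O i) ((rowSet n (MO n O J) i).erase i) := by
  have hnot_lt : ∀ j₁ ∈ (rowSet n (MO n O J) i).erase i, ∀ j₂ ∈ (rowSet n (MO n O J) i).erase i,
      prevO n O i j₁ = prevO n O i j₂ → ¬ ordKey n j₁ < ordKey n j₂ := by
    intro j₁ hj₁ j₂ hj₂ he hlt
    obtain ⟨-, hplt₁, -⟩ := prevO_spec_of_mem_rowSet hA hO hJ hj₁
    obtain ⟨-, -, hpmax₂⟩ := prevO_spec_of_mem_rowSet hA hO hJ hj₂
    have hj₁M := (mem_rowSet_MO hJ).1 (Finset.mem_of_mem_erase hj₁)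
    have hlt₁ := hlt.trans_le (hmax j₂ ((mem_rowSet_MO hJ).1 (Finset.mem_of_mem_erase hj₂)))
    have hj₁O := mem_of_mem_MO_of_ple hj₁M (MO_subset hm) ⟨le_rfl, hlt₁.le⟩
      fun e => hlt₁.ne (by rw [(Prod.mk.inj e).2])
    exact (he ▸ hpmax₂ j₁ hj₁O hlt).not_gt hplt₁
  intro j₁ hj₁ j₂ hj₂ he
  exact ordKey_injOn (Finset.filter_subset _ _ (Finset.mem_of_mem_erase hj₁))
    (Finset.filter_subset _ _ (Finset.mem_of_mem_erase hj₂))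
    (le_antisymm (not_lt.1 (hnot_lt j₂ hj₂ j₁ hj₁ he.symm)) (not_lt.1 (hnot_lt j₁ hj₁ j₂ hj₂ he)))

theorem sum_rowSet_sub_sum_prevO (hA : Aset n ⊆ O) (hO : O ⊆ Pfin n) (hJ : IsIdeal n J)
    {i m : ℤ} (hm : (i, m) ∈ MO n O J) (hmax : ∀ j, (i, j) ∈ MO n O J → ordKey n j ≤ ordKey n m)
    (f : ℤ → ℝ) :
    ∑ j ∈ rowSet n (MO n O J) i, f j - ∑ j ∈ (rowSet n (MO n O J) i).erase i, f (prevO n O i j)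
      = f m := by
  have hmP := mem_Pfin.1 (hJ.MO_subset_Pfin hm)
  have hiR : i ∈ rowSet n (MO n O J) i := (mem_rowSet_MO hJ).2 (Finset.mem_union_left _
    (Finset.mem_inter.2 ⟨hJ.diag_mem (MO_subset hm), hA (diag_mem_Aset hmP.1 hmP.2.1)⟩))
  exact Finset.sum_sub_sum_erase_comp hiR ((mem_rowSet_MO hJ).2 hm)
    (mapsTo_prevO_rowSet hA hO hJ hm hmax) (injOn_prevO_rowSet hA hO hJ hm hmax) f

theorem xiMap_indicMO_apply (hJ : IsIdeal n J) {i c : ℤ} (hic : inP n (i, c)) :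
    xiMap n O (indicMO n O J) (i, c)
      = ∑ j ∈ rowSet n (MO n O J) i, (if rMap n O i j = c then 1 else 0)
        - ∑ j ∈ (rowSet n (MO n O J) i).erase i,
            (if rMap n O i (prevO n O i j) = c then 1 else 0) := by
  have hMP : ∀ j, (i, j) ∈ MO n O J → inP n (i, j) := fun j hj => mem_Pfin.1 (hJ.MO_subset_Pfin hj)
  rw [xiMap, if_pos hic, rowSet, ← Finset.filter_ne', Finset.filter_filter]
  simp only [Finset.sum_filter, indicMO]
  congr 1 <;> refine Finset.sum_congr rfl fun j _ => ?_ <;> by_cases hj : (i, j) ∈ MO n O J <;>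
    simp [hj, hMP j, ite_and, ite_not]

end Telescope

/-- For `J ∈ 𝒥ₖ`, `ξ(1_{M_O(J)}) = 1_{{(i, w^{O,J}(i)) : 1 ≤ i ≤ k}}`. -/
theorem stmt10 (n k : ℕ) (O J : Finset (ℤ × ℤ)) (hA : Aset n ⊆ O) (hO : O ⊆ Pfin n)
    (hJ : IsIdeal n J) (hJk : (J ∩ Aset n).card = k) :
    xiMap n O (indicMO n O J)
      = fun q => if 1 ≤ q.1 ∧ q.1 ≤ (k : ℤ) ∧ q.2 = wOJ n O J q.1 then 1 else 0 := by
  funext ⟨i, c⟩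
  by_cases hic : inP n (i, c)
  · have hdiag := hJ.diag_mem_iff hJk hic.1 hic.2.1
    rw [xiMap_indicMO_apply hJ hic]
    by_cases hik : i ≤ k
    · obtain ⟨m, hm, hmax⟩ := exists_max_row hA hJ (hdiag.2 hik)
      rw [sum_rowSet_sub_sum_prevO hA hO hJ hm hmax, wOJ_apply_eq_rMap hO hJ hm hmax]
      simp [hic.1, hik, eq_comm]
    · have hempty : rowSet n (MO n O J) i = ∅ := Finset.eq_empty_of_forall_notMem fun j hj =>
        hik (hdiag.1 (hJ.diag_mem (MO_subset ((mem_rowSet_MO hJ).1 hj))))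
      simp [hempty, hik]
  · have hM : (i, c) ∉ MO n O J := fun h => hic (mem_Pfin.1 (hJ.MO_subset_Pfin h))
    have hkn : (k : ℤ) ≤ n := by exact_mod_cast hJk ▸ card_inter_Aset_le J
    rw [xiMap, if_neg hic, indicMO, if_neg hM, if_neg]
    rintro ⟨h1, hik, hc : c = _⟩
    rw [hc] at hic
    exact hic (inP_wOJ_apply hA hO hJ ((hJ.diag_mem_iff hJk h1 (hik.trans hkn)).2 hik))

end
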